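/- arXiv:1301.1811 — 2 statements merged into one kernel-verified Lean document; each statement's English description precedes it below -/
import Mathlib

section
/- Let H ⊂ ℝ^N be an open affine half-space with reflection Q at ∂H and let ρ > 0. Then there exist constants c̃₁ = c̃₁(N,s,ρ) > 0 and c̃₂ = c̃₂(N,s,ρ) > 0 such that the following holds: if x₀ ∈ H satisfies dist(x₀,∂H) ≥ 2ρ and v ∈ H^s(ℝ^N) ∩ L^∞(ℝ^N) is a continuous antisymmetric function with v ≥ 0 on B_{2ρ}(x₀), then its L_s-harmonic extension w satisfies w(x,y)/y^{2s} ≥ c̃₁ (∫_{B_ρ(x₀)} v(z)^{1/2} dz)² − c̃₂ ‖v⁻‖_{L^∞(H∖B_{2ρ}(x₀))} for all (x,y) ∈ B_ρ(x₀)×(0,1]. -/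
/-!
Dividing by `y ^ (2s)`, the extension becomes `∫ v(z) P_y(x - z) dz` with
`P_y(w) = p_{N,s} (|w|² + y²)^(-(N+2s)/2)`. Antisymmetry folds `ℝ^N \ H` onto `H`:
the integral equals `∫_H v(z) (P_y(x - z) - P_y(x - Qz)) dz`, and the kernel is nonnegative
because `|x - Qz|² = |x - z|² + 4 d(x) d(z)` with `d` the distance to `∂H`.
For `x, z ∈ B_ρ(x₀)` both distances are at least `ρ`, so the kernel is bounded below by a
constant depending only on `N, s, ρ` (using `|x - z|² + y² ≤ 4ρ² + 1`), and Jensen's inequality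
gives `(∫_{B_ρ} √v)² ≤ |B_ρ| ∫_{B_ρ} v`. On `B_{2ρ}(x₀) \ B_ρ(x₀)` the integrand is nonnegative.
On `H \ B_{2ρ}(x₀)` we have `v ≥ -‖v⁻‖_∞`, the kernel is at most `P_y(x - z)`, and
`|x - z| ≥ ρ` gives `P_y(x - z) ≤ 2^((N+2s)/2) P_ρ(x - z)` uniformly in `y`; the latter is
integrable.
-/

open MeasureTheory Real Set Filter Topology Metric
open scoped NNReal ENNReal

noncomputable section

/-- Euclidean space `ℝ^N`. -/
abbrev Euc (N : ℕ) := EuclideanSpace ℝ (Fin N)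

/-- View a point of `ℝ^N` as a tuple of coordinates. -/
def toFun {N : ℕ} (x : Euc N) : Fin N → ℝ := x

/-- View a tuple of coordinates as a point of `ℝ^N`. -/
def ofFun {N : ℕ} (x : Fin N → ℝ) : Euc N := WithLp.toLp 2 x

/-- The normalization constant `c_{N,s}`. -/
def cNs (N : ℕ) (s : ℝ) : ℝ :=
  s * (1 - s) * Real.pi ^ (-(N : ℝ) / 2) * (4 : ℝ) ^ s *
    Real.Gamma ((N : ℝ) / 2 + s) / Real.Gamma (2 - s)

/-- The fractional quadratic form `E(u,v)`. -/
def fracForm (N : ℕ) (s : ℝ) (u v : Euc N → ℝ) : ℝ :=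
  (cNs N s / 2) *
    ∫ x : Euc N, ∫ y : Euc N, (u x - u y) * (v x - v y) * ‖x - y‖ ^ (-(N : ℝ) - 2 * s)

/-- Gagliardo-type seminorm (as an extended nonnegative number) over a set `U`. -/
def gagliardo (N : ℕ) (s : ℝ) (U : Set (Euc N)) (u : Euc N → ℝ) : ℝ≥0∞ :=
  ∫⁻ x in U, ∫⁻ y in U, ENNReal.ofReal ((u x - u y) ^ 2 * ‖x - y‖ ^ (-(N : ℝ) - 2 * s))

/-- Membership in `H^s(ℝ^N)`. -/
def MemHs (N : ℕ) (s : ℝ) (u : Euc N → ℝ) : Prop :=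
  MemLp u 2 (volume : Measure (Euc N)) ∧ gagliardo N s Set.univ u < ⊤

/-- Membership in `ℋ^s_0(U)`. -/
def MemHs0 (N : ℕ) (s : ℝ) (U : Set (Euc N)) (u : Euc N → ℝ) : Prop :=
  MemHs N s u ∧ ∀ᵐ x ∂(volume : Measure (Euc N)), x ∉ U → u x = 0

/-- Membership in `𝒱^s(U')`. -/
def MemVs (N : ℕ) (s : ℝ) (U' : Set (Euc N)) (u : Euc N → ℝ) : Prop :=
  MemLp u ⊤ (volume : Measure (Euc N)) ∧ gagliardo N s U' u < ⊤

/-- Membership in `C_0(Ω)`. -/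
def MemC0 (N : ℕ) (Ω : Set (Euc N)) (u : Euc N → ℝ) : Prop :=
  Continuous u ∧ ∀ x ∉ Ω, u x = 0

/-- Supremum of a real valued function over a set. -/
def supOn {X : Type*} (A : Set X) (f : X → ℝ) : ℝ := sSup (f '' A)

/-- Supremum of a space-time function over a product set. -/
def supOn2 {N : ℕ} (T : Set ℝ) (A : Set (Euc N)) (w : ℝ → Euc N → ℝ) : ℝ :=
  sSup ((fun p : ℝ × Euc N => w p.1 p.2) '' (T ×ˢ A))

/-- The mean `[w]_{L¹(T×A)}` of a space-time function over a product set. -/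
def meanOn2 {N : ℕ} (T : Set ℝ) (A : Set (Euc N)) (w : ℝ → Euc N → ℝ) : ℝ :=
  ((((volume : Measure ℝ).prod (volume : Measure (Euc N))) (T ×ˢ A)).toReal)⁻¹ *
    ∫ p : ℝ × Euc N in T ×ˢ A,
      w p.1 p.2 ∂((volume : Measure ℝ).prod (volume : Measure (Euc N)))

/-- Negative part of a function. -/
def negp {X : Type*} (f : X → ℝ) : X → ℝ := fun x => max (-(f x)) 0

/-- Positive part of a function. -/
def posp {X : Type*} (f : X → ℝ) : X → ℝ := fun x => max (f x) 0

/-- The open affine half-space `{x : ⟪a,x⟫ > b}`. -/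
def halfSpace {N : ℕ} (a : Euc N) (b : ℝ) : Set (Euc N) := {x | b < (inner ℝ a x : ℝ)}

/-- Reflection at the hyperplane `{x : ⟪a,x⟫ = b}`. -/
def reflAt {N : ℕ} (a : Euc N) (b : ℝ) (x : Euc N) : Euc N :=
  x - ((2 * ((inner ℝ a x : ℝ) - b)) / ‖a‖ ^ 2) • a

/-- A function is antisymmetric w.r.t. the reflection at `{⟪a,x⟫ = b}`. -/
def Antisym {N : ℕ} (a : Euc N) (b : ℝ) (w : Euc N → ℝ) : Prop :=
  ∀ x, w (reflAt a b x) = - w x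

/-- `v` (with time derivative `vt`) is a supersolution of
`∂_t v + (-Δ)^s v = c v + g` on `T × U`. -/
def IsSupersolution (N : ℕ) (s : ℝ) (T : Set ℝ) (U : Set (Euc N))
    (c g : ℝ → Euc N → ℝ) (v vt : ℝ → Euc N → ℝ) : Prop :=
  (∃ U' : Set (Euc N), IsOpen U' ∧ closure U ⊆ U' ∧ ∀ t ∈ T, MemVs N s U' (v t)) ∧
  (∀ t ∈ T, ∀ x ∈ U, HasDerivWithinAt (fun τ => v τ x) (vt t x) T t) ∧
  (∀ φ : Euc N → ℝ, MemHs0 N s U φ → (∀ x, 0 ≤ φ x) →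
    ∀ᵐ t ∂(volume : Measure ℝ), t ∈ T →
      fracForm N s (v t) φ ≥ ∫ x in U, (c t x * v t x + g t x - vt t x) * φ x)

/-- Antisymmetric supersolution of `∂_t v + (-Δ)^s v = c v` on `T × U`, `U ⊆ H`. -/
def IsAntisymSupersol (N : ℕ) (s : ℝ) (a : Euc N) (b : ℝ) (T : Set ℝ)
    (U : Set (Euc N)) (c : ℝ → Euc N → ℝ) (v vt : ℝ → Euc N → ℝ) : Prop :=
  IsSupersolution N s T U c (fun _ _ => 0) v vt ∧ U ⊆ halfSpace a b ∧
  ∀ t ∈ T, Antisym a b (v t)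

/-- Entire antisymmetric supersolution: in addition `v ≥ 0` on `T × (H \ U)`. -/
def IsEntireAntisymSupersol (N : ℕ) (s : ℝ) (a : Euc N) (b : ℝ) (T : Set ℝ)
    (U : Set (Euc N)) (c : ℝ → Euc N → ℝ) (v vt : ℝ → Euc N → ℝ) : Prop :=
  IsAntisymSupersol N s a b T U c v vt ∧
  ∀ t ∈ T, ∀ x ∈ halfSpace a b \ U, 0 ≤ v t x

/-- Entire supersolution: a supersolution with `v ≥ 0` on `T × (ℝ^N \ U)`. -/
def IsEntireSupersol (N : ℕ) (s : ℝ) (T : Set ℝ) (U : Set (Euc N))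
    (c : ℝ → Euc N → ℝ) (v vt : ℝ → Euc N → ℝ) : Prop :=
  IsSupersolution N s T U c (fun _ _ => 0) v vt ∧ ∀ t ∈ T, ∀ x ∉ U, 0 ≤ v t x

/-- The quadratic form associated with a symmetric kernel `k`. -/
def kernForm (N : ℕ) (k : Euc N → Euc N → ℝ) (u v : Euc N → ℝ) : ℝ :=
  (1 / 2) * ∫ x : Euc N, ∫ y : Euc N, (u x - u y) * (v x - v y) * k x y

/-- Condition (K) on a kernel. -/
def KernelCond (N : ℕ) (s : ℝ) (r₀ C₁ C₂ : ℝ) (k : Euc N → Euc N → ℝ) : Prop :=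
  (∀ x y : Euc N, 0 ≤ k x y) ∧
  (∀ x y : Euc N, x ≠ y → k x y = k y x) ∧
  (∀ x y : Euc N, x ≠ y → k x y ≤ C₁ * ‖x - y‖ ^ (-(N : ℝ) - 2 * s)) ∧
  (∀ x y : Euc N, x ≠ y → ‖x - y‖ ≤ r₀ → C₂ * ‖x - y‖ ^ (-(N : ℝ) - 2 * s) ≤ k x y)

/-- `v` (with time derivative `vt`) is a supersolution of
`∂_t v - P.V.∫ (v(t,y)-v(t,x))k(x,y)dy = g` on `T × U`. -/
def IsKernelSupersol (N : ℕ) (s : ℝ) (k : Euc N → Euc N → ℝ) (T : Set ℝ)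
    (U : Set (Euc N)) (g : ℝ → Euc N → ℝ) (v vt : ℝ → Euc N → ℝ) : Prop :=
  (∃ U' : Set (Euc N), IsOpen U' ∧ closure U ⊆ U' ∧ ∀ t ∈ T, MemVs N s U' (v t)) ∧
  (∀ t ∈ T, ∀ x ∈ U, HasDerivWithinAt (fun τ => v τ x) (vt t x) T t) ∧
  (∀ φ : Euc N → ℝ, MemHs0 N s U φ → (∀ x, 0 ≤ φ x) →
    ∀ᵐ t ∂(volume : Measure ℝ), t ∈ T →
      kernForm N k (v t) φ ≥ ∫ x in U, (g t x - vt t x) * φ x)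

/-- A (global, weak) solution of problem (P), with prescribed time derivative `ut`. -/
def IsSolutionP (N : ℕ) (s : ℝ) (Ω : Set (Euc N)) (B : Set ℝ)
    (f : ℝ → Euc N → ℝ → ℝ) (u ut : ℝ → Euc N → ℝ) : Prop :=
  (∀ t : ℝ, 0 < t → MemHs0 N s Ω (u t) ∧ MemC0 N Ω (u t)) ∧
  (∀ t : ℝ, 0 < t → ∀ x ∈ Ω, u t x ∈ B) ∧
  ContinuousOn (fun p : ℝ × Euc N => u p.1 p.2) (Set.Ioi 0 ×ˢ (Set.univ : Set (Euc N))) ∧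
  (∀ t : ℝ, 0 < t → ∀ x ∈ Ω, HasDerivAt (fun τ => u τ x) (ut t x) t) ∧
  (∀ t : ℝ, 0 < t → ∀ φ : Euc N → ℝ, MemHs0 N s Ω φ →
    fracForm N s (u t) φ = ∫ x in Ω, (f t x (u t x) - ut t x) * φ x)

/-- The ω-limit set of `u` with respect to the `L^∞` norm. -/
def omegaSet (N : ℕ) (Ω : Set (Euc N)) (u : ℝ → Euc N → ℝ) (z : Euc N → ℝ) : Prop :=
  MemC0 N Ω z ∧ ∃ tk : ℕ → ℝ, Tendsto tk atTop atTop ∧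
    TendstoUniformly (fun k x => u (tk k) x) z atTop

/-- Multiply the first coordinate by `σ`. -/
def flipFirst {N : ℕ} [NeZero N] (σ : ℝ) (x : Euc N) : Euc N :=
  ofFun (Function.update (toFun x) 0 (σ * toFun x 0))

/-- `Ω` has a Lipschitz boundary: near any boundary point, after an isometry of `ℝ^N`,
`Ω` is the region above the graph of a Lipschitz function. -/
def HasLipschitzBoundary (N : ℕ) (Ω : Set (Euc N)) : Prop :=
  ∀ x ∈ frontier Ω, ∃ (r : ℝ) (φ : Euc N ≃ᵢ Euc N) (g : Euc N → ℝ) (K : ℝ≥0) (i : Fin N),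
    0 < r ∧ LipschitzWith K g ∧
    (∀ y y' : Euc N, (∀ j : Fin N, j ≠ i → toFun y j = toFun y' j) → g y = g y') ∧
    ∀ y ∈ Metric.ball x r, (y ∈ Ω ↔ g (φ y) < toFun (φ y) i)

/-- Condition (D1). -/
def CondD1 (N : ℕ) [NeZero N] (Ω : Set (Euc N)) : Prop :=
  IsOpen Ω ∧ IsConnected Ω ∧ Bornology.IsBounded Ω ∧ HasLipschitzBoundary N Ω ∧
  ∀ x ∈ Ω, ∀ σ ∈ Set.Icc (-1 : ℝ) 1, flipFirst σ x ∈ Ω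

/-- A set has at most finitely many connected components. -/
def FinitelyManyComponents {X : Type*} [TopologicalSpace X] (A : Set X) : Prop :=
  {C : Set X | ∃ x ∈ A, C = connectedComponentIn A x}.Finite

/-- Condition (D2). -/
def CondD2 (N : ℕ) [NeZero N] (Ω : Set (Euc N)) : Prop :=
  ∀ lam : ℝ, 0 < lam → FinitelyManyComponents {x ∈ Ω | lam < toFun x 0}

/-- Condition (F1). -/
def CondF1 (N : ℕ) (Ω : Set (Euc N)) (B : Set ℝ) (f : ℝ → Euc N → ℝ → ℝ) : Prop :=
  ContinuousOn (fun p : ℝ × Euc N × ℝ => f p.1 p.2.1 p.2.2)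
    (Set.Ioi 0 ×ˢ Ω ×ˢ B) ∧
  ∀ K : Set ℝ, K ⊆ B → Bornology.IsBounded K → ∃ L : ℝ, 0 < L ∧
    ∀ t : ℝ, 0 < t → ∀ x ∈ Ω, ∀ p ∈ K, ∀ q ∈ K, |f t x p - f t x q| ≤ L * |p - q|

/-- Condition (F2). -/
def CondF2 (N : ℕ) [NeZero N] (Ω : Set (Euc N)) (B : Set ℝ) (f : ℝ → Euc N → ℝ → ℝ) : Prop :=
  ∀ t : ℝ, 0 < t → ∀ p ∈ B, ∀ x ∈ Ω, ∀ σ ∈ Set.Icc (-1 : ℝ) 1,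
    f t x p ≤ f t (flipFirst σ x) p

/-- Condition (U1): global uniform bound. -/
def CondU1 (N : ℕ) (u : ℝ → Euc N → ℝ) : Prop :=
  ∃ cu : ℝ, 0 < cu ∧ ∀ t : ℝ, 0 < t → ∀ x, |u t x| ≤ cu

/-- Condition (U2): uniform equicontinuity of `u(τ+·,·)`, `τ ≥ 1`, on `[0,1] × Ω̄`. -/
def CondU2 (N : ℕ) (Ω : Set (Euc N)) (u : ℝ → Euc N → ℝ) : Prop :=
  ∀ ε : ℝ, 0 < ε → ∃ δ : ℝ, 0 < δ ∧ ∀ τ : ℝ, 1 ≤ τ →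
    ∀ t ∈ Set.Icc τ (τ + 1), ∀ t' ∈ Set.Icc τ (τ + 1),
    ∀ x ∈ closure Ω, ∀ x' ∈ closure Ω,
      |t - t'| < δ → dist x x' < δ → |u t x - u t' x'| < ε

/-- The half-space `H_λ = {x₁ > λ}`. -/
def Hlam (N : ℕ) [NeZero N] (lam : ℝ) : Set (Euc N) := {x | lam < toFun x 0}

/-- Reflection `Q_λ` at the hyperplane `{x₁ = λ}`. -/
def Qlam (N : ℕ) [NeZero N] (lam : ℝ) (x : Euc N) : Euc N :=
  ofFun (Function.update (toFun x) 0 (2 * lam - toFun x 0))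

/-- `V_λ z = z ∘ Q_λ - z`. -/
def Vlam (N : ℕ) [NeZero N] (lam : ℝ) (z : Euc N → ℝ) : Euc N → ℝ :=
  fun x => z (Qlam N lam x) - z x

/-- Statement `(S_λ)`. -/
def Slam (N : ℕ) [NeZero N] (lam : ℝ) (u : ℝ → Euc N → ℝ) : Prop :=
  Tendsto (fun t => supOn (Hlam N lam) (negp (Vlam N lam (u t)))) atTop (nhds 0)

/-- `l = max {x₁ : x ∈ Ω}`. -/
def lmax (N : ℕ) [NeZero N] (Ω : Set (Euc N)) : ℝ :=
  sSup ((fun x : Euc N => toFun x 0) '' Ω)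

/-- The standing assumptions of Section 3 of the paper: (D1), (F1), (F2), `u` a
nonnegative global solution of (P) satisfying (U1) and (U2), `ℬ` an open interval. -/
def Standing (N : ℕ) [NeZero N] (s : ℝ) (Ω : Set (Euc N)) (B : Set ℝ)
    (f : ℝ → Euc N → ℝ → ℝ) (u ut : ℝ → Euc N → ℝ) : Prop :=
  IsOpen B ∧ B.OrdConnected ∧
  CondD1 N Ω ∧ CondF1 N Ω B f ∧ CondF2 N Ω B f ∧
  IsSolutionP N s Ω B f u ut ∧ (∀ t : ℝ, 0 < t → ∀ x, 0 ≤ u t x) ∧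
  CondU1 N u ∧ CondU2 N Ω u

/-- The normalizing constant `p_{N,s}` of the Caffarelli–Silvestre Poisson kernel. -/
def pNs (N : ℕ) (s : ℝ) : ℝ :=
  (∫ x : Euc N, (‖x‖ ^ 2 + 1) ^ (-((N : ℝ) + 2 * s) / 2))⁻¹

/-- The Caffarelli–Silvestre (`L_s`-harmonic) extension of `v` to the upper half-space. -/
def csExtension (N : ℕ) (s : ℝ) (v : Euc N → ℝ) (x : Euc N) (y : ℝ) : ℝ :=
  ∫ z : Euc N, v z *
    (pNs N s * y ^ (2 * s) * (‖x - z‖ ^ 2 + y ^ 2) ^ (-((N : ℝ) + 2 * s) / 2))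

/-- The constant `d_s = 2^{1-2s} Γ(1-s)/Γ(s)`. -/
def dCS (s : ℝ) : ℝ := (2 : ℝ) ^ (1 - 2 * s) * Real.Gamma (1 - s) / Real.Gamma s

/-- The Laplacian as the trace of the second derivative. -/
def lap (N : ℕ) (Ψ : Euc N → ℝ) (x : Euc N) : ℝ :=
  ∑ i : Fin N, iteratedFDeriv ℝ 2 Ψ x ![EuclideanSpace.single i 1, EuclideanSpace.single i 1]

/-- `Ψ` is the positive first Dirichlet eigenfunction on `B_ρ(0)` with eigenvalue `lam₁`,
normalized by `‖Ψ‖_∞ = 1`. -/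
def IsFirstEigen (N : ℕ) (ρ lam₁ : ℝ) (Ψ : Euc N → ℝ) : Prop :=
  0 < lam₁ ∧
  ContinuousOn Ψ (Metric.closedBall (0 : Euc N) ρ) ∧
  (∀ x ∈ Metric.ball (0 : Euc N) ρ, ContDiffAt ℝ 2 Ψ x) ∧
  (∀ x ∈ Metric.ball (0 : Euc N) ρ, 0 < Ψ x) ∧
  (∀ x ∈ Metric.sphere (0 : Euc N) ρ, Ψ x = 0) ∧
  (∀ x ∈ Metric.ball (0 : Euc N) ρ, -lap N Ψ x = lam₁ * Ψ x) ∧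
  sSup (Ψ '' Metric.closedBall (0 : Euc N) ρ) = 1

/-- `inrad D > ρ`: some `r > ρ` is such that every connected component of `D`
contains a ball of radius `r` centered in `D`. -/
def InradGT {N : ℕ} (D : Set (Euc N)) (ρ : ℝ) : Prop :=
  ∃ r : ℝ, ρ < r ∧ ∀ x ∈ D, ∃ x₀ ∈ D, Metric.ball x₀ r ⊆ connectedComponentIn D x

/-- The antisymmetrized kernel `J(x,y)`. -/
def Jker (N : ℕ) (s : ℝ) (a : Euc N) (b : ℝ) (x y : Euc N) : ℝ :=
  cNs N s * (‖x - y‖ ^ (-(N : ℝ) - 2 * s) - ‖x - reflAt a b y‖ ^ (-(N : ℝ) - 2 * s))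

/-- `κ_H(x) = ∫_{ℝ^N ∖ H} c_{N,s} |x-y|^{-N-2s} dy`. -/
def kappaH (N : ℕ) (s : ℝ) (a : Euc N) (b : ℝ) (x : Euc N) : ℝ :=
  ∫ y in (halfSpace a b)ᶜ, cNs N s * ‖x - y‖ ^ (-(N : ℝ) - 2 * s)

end

namespace HalfSpace

variable {N : ℕ} {a : Euc N} {b : ℝ}

lemma reflAt_eq_reflection_add (a : Euc N) (b : ℝ) (x : Euc N) :
    reflAt a b x = (ℝ ∙ a)ᗮ.reflection x + (2 * b / ‖a‖ ^ 2) • a := by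
  rw [Submodule.reflection_orthogonal_apply, Submodule.reflection_singleton_apply, reflAt]
  simp only [RCLike.ofReal_real_eq_id, id]
  rw [mul_sub, sub_div, sub_smul, mul_div_assoc, mul_smul, two_smul]
  abel

lemma measurePreserving_reflAt (a : Euc N) (b : ℝ) :
    MeasurePreserving (reflAt a b) volume volume := by
  have h : reflAt a b = (· + (2 * b / ‖a‖ ^ 2) • a) ∘ (ℝ ∙ a)ᗮ.reflection :=
    funext (reflAt_eq_reflection_add a b)
  rw [h]
  exact (measurePreserving_add_right volume _).comp (LinearIsometryEquiv.measurePreserving _)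

lemma continuous_reflAt (a : Euc N) (b : ℝ) : Continuous (reflAt a b) := by
  unfold reflAt; fun_prop

lemma inner_reflAt (ha : a ≠ 0) (x : Euc N) :
    inner ℝ a (reflAt a b x) = 2 * b - inner ℝ a x := by
  have : ‖a‖ ^ 2 ≠ 0 := by positivity
  simp only [reflAt, inner_sub_right, real_inner_smul_right, real_inner_self_eq_norm_sq]
  field_simp
  ring

lemma reflAt_reflAt (ha : a ≠ 0) (x : Euc N) : reflAt a b (reflAt a b x) = x := by
  rw [reflAt, inner_reflAt ha, reflAt, sub_sub, ← add_smul]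
  ring_nf
  simp

lemma reflAt_eq_self (x : Euc N) (hx : inner ℝ a x = b) : reflAt a b x = x := by
  simp [reflAt, hx]

lemma norm_sub_reflAt_sq (ha : a ≠ 0) (x z : Euc N) :
    ‖x - reflAt a b z‖ ^ 2
      = ‖x - z‖ ^ 2 + 4 * ((inner ℝ a x - b) * (inner ℝ a z - b)) / ‖a‖ ^ 2 := by
  have : ‖a‖ ^ 2 ≠ 0 := by positivity
  rw [reflAt, sub_sub_eq_add_sub, add_sub_right_comm, norm_add_sq_real, real_inner_smul_right,
    inner_sub_left, norm_smul, mul_pow, Real.norm_eq_abs, sq_abs, real_inner_comm x a,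
    real_inner_comm z a]
  field_simp
  ring

lemma isOpen_halfSpace (a : Euc N) (b : ℝ) : IsOpen (halfSpace a b) :=
  isOpen_lt continuous_const (continuous_const.inner continuous_id)

lemma frontier_halfSpace (ha : a ≠ 0) : frontier (halfSpace a b) = {z | inner ℝ a z = b} := by
  have hsurj : Function.Surjective (innerSL ℝ a) := fun t =>
    ⟨(t / ‖a‖ ^ 2) • a, by
      have : ‖a‖ ^ 2 ≠ 0 := by positivity
      simp [this]⟩
  have h := ((innerSL ℝ a).isOpenMap hsurj).preimage_frontier_eq_frontier_preimage
    (innerSL ℝ a).continuous (Ioi b)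
  rw [frontier_Ioi] at h
  exact h.symm

lemma infDist_frontier_halfSpace_le (ha : a ≠ 0) (x : Euc N) :
    infDist x (frontier (halfSpace a b)) ≤ |inner ℝ a x - b| / ‖a‖ := by
  have ha2 : ‖a‖ ^ 2 ≠ 0 := by positivity
  set q := x - ((inner ℝ a x - b) / ‖a‖ ^ 2) • a
  have hq : q ∈ frontier (halfSpace a b) := by
    rw [frontier_halfSpace ha, mem_ofPred_eq, inner_sub_right, real_inner_smul_right,
      real_inner_self_eq_norm_sq, div_mul_cancel₀ _ ha2]
    ring
  calc infDist x (frontier (halfSpace a b)) ≤ dist x q := infDist_le_dist_of_mem hq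
    _ = |inner ℝ a x - b| / ‖a‖ := by
      rw [dist_eq_norm, sub_sub_cancel, norm_smul, Real.norm_eq_abs, abs_div, abs_of_pos
        (by positivity : 0 < ‖a‖ ^ 2)]
      field_simp

lemma sub_dist_mul_norm_le_inner_sub (ha : a ≠ 0) {x₀ : Euc N} (hx₀ : x₀ ∈ halfSpace a b)
    {r : ℝ} (hr : r ≤ infDist x₀ (frontier (halfSpace a b))) (z : Euc N) :
    (r - dist z x₀) * ‖a‖ ≤ inner ℝ a z - b := by
  have hfar : r * ‖a‖ ≤ inner ℝ a x₀ - b := by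
    have h := hr.trans (infDist_frontier_halfSpace_le ha x₀)
    rwa [abs_of_pos (sub_pos.2 hx₀), le_div_iff₀ (norm_pos_iff.2 ha)] at h
  have hcs : inner ℝ a (x₀ - z) ≤ ‖a‖ * dist z x₀ := by
    rw [dist_comm, dist_eq_norm]
    exact real_inner_le_norm a _
  rw [inner_sub_right] at hcs
  linarith

lemma ball_subset_halfSpace (ha : a ≠ 0) {x₀ : Euc N} (hx₀ : x₀ ∈ halfSpace a b) {r : ℝ}
    (hr : r ≤ infDist x₀ (frontier (halfSpace a b))) : ball x₀ r ⊆ halfSpace a b :=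
  fun z hz => by
  have hpos : 0 < (r - dist z x₀) * ‖a‖ := mul_pos (sub_pos.2 hz) (norm_pos_iff.2 ha)
  have := sub_dist_mul_norm_le_inner_sub ha hx₀ hr z
  show b < inner ℝ a z
  linarith

lemma mul_norm_le_inner_sub_of_mem_ball (ha : a ≠ 0) {x₀ : Euc N} (hx₀ : x₀ ∈ halfSpace a b)
    {ρ : ℝ} (hρ : 2 * ρ ≤ infDist x₀ (frontier (halfSpace a b))) {z : Euc N}
    (hz : z ∈ ball x₀ ρ) : ρ * ‖a‖ ≤ inner ℝ a z - b := by
  have := sub_dist_mul_norm_le_inner_sub ha hx₀ hρ z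
  nlinarith [mem_ball.1 hz, norm_nonneg a]

lemma measurableEmbedding_reflAt (ha : a ≠ 0) : MeasurableEmbedding (reflAt a b) :=
  (Homeomorph.mk ⟨reflAt a b, reflAt a b, reflAt_reflAt ha, reflAt_reflAt ha⟩
    (continuous_reflAt a b) (continuous_reflAt a b)).measurableEmbedding

lemma integral_eq_setIntegral_halfSpace_add_reflAt (ha : a ≠ 0) {F : Euc N → ℝ}
    (hF : Integrable F) (hF0 : ∀ z, inner ℝ a z = b → F z = 0) :
    ∫ z, F z = ∫ z in halfSpace a b, (F z + F (reflAt a b z)) := by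
  have hH : MeasurableSet (halfSpace a b) := (isOpen_halfSpace a b).measurableSet
  have hFQ : Integrable (F ∘ reflAt a b) :=
    ((measurePreserving_reflAt a b).integrable_comp_emb (measurableEmbedding_reflAt ha)).2 hF
  have hQH : reflAt a b ⁻¹' halfSpace a b ⊆ (halfSpace a b)ᶜ := fun z hz => by
    simp only [mem_preimage, halfSpace, mem_ofPred_eq, inner_reflAt ha] at hz
    simp only [mem_compl_iff, halfSpace, mem_ofPred_eq, not_lt]
    linarith
  -- `(halfSpace a b)ᶜ` is `reflAt a b ⁻¹' halfSpace a b` plus the hyperplane, where `F` vanishes.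
  have hcompl : ∫ z in (halfSpace a b)ᶜ, F z = ∫ z in halfSpace a b, F (reflAt a b z) := by
    rw [setIntegral_eq_of_subset_of_forall_sdiff_eq_zero hH.compl hQH]
    · have h := (measurePreserving_reflAt a b).setIntegral_preimage_emb
        (measurableEmbedding_reflAt ha) (F ∘ reflAt a b) (halfSpace a b)
      simpa only [Function.comp_apply, reflAt_reflAt ha] using h
    · intro z ⟨hzH, hzQ⟩
      simp only [mem_compl_iff, mem_preimage, halfSpace, mem_ofPred_eq, not_lt,
        inner_reflAt ha] at hzH hzQ
      exact hF0 z (by linarith)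
  rw [← integral_add_compl hH hF, hcompl]
  exact (integral_add hF.integrableOn hFQ.integrableOn).symm

lemma _root_.Antisym.integral_mul_eq_setIntegral_halfSpace (ha : a ≠ 0) {v K : Euc N → ℝ}
    (hv : Antisym a b v) (hvK : Integrable fun z => v z * K z) :
    ∫ z, v z * K z = ∫ z in halfSpace a b, v z * (K z - K (reflAt a b z)) := by
  have hv0 : ∀ z, inner ℝ a z = b → v z * K z = 0 := fun z hz => by
    have h := hv z
    rw [reflAt_eq_self z hz] at h
    rw [show v z = 0 by linarith, zero_mul]
  rw [integral_eq_setIntegral_halfSpace_add_reflAt ha hvK hv0]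
  simp_rw [hv _]
  congr with z
  ring

end HalfSpace

section NegativePart

variable {X : Type*}

lemma supOn_negp_nonneg (A : Set X) (f : X → ℝ) : 0 ≤ supOn A (negp f) :=
  Real.sSup_nonneg (by rintro _ ⟨z, -, rfl⟩; exact le_max_right _ _)

lemma neg_supOn_negp_le {A : Set X} {f : X → ℝ} (hf : BddBelow (f '' A)) {z : X} (hz : z ∈ A) :
    -supOn A (negp f) ≤ f z := by
  obtain ⟨C, hC⟩ := hf
  have hbdd : BddAbove (negp f '' A) := ⟨max (-C) 0, by
    rintro _ ⟨z, hz, rfl⟩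
    exact max_le_max (neg_le_neg (hC ⟨z, hz, rfl⟩)) le_rfl⟩
  have hsup : negp f z ≤ supOn A (negp f) := le_csSup hbdd ⟨z, hz, rfl⟩
  have hneg : -f z ≤ negp f z := le_max_left _ _
  linarith

end NegativePart

section Estimates

variable {X : Type*} [MeasurableSpace X] {μ : Measure X} {S : Set X}

lemma Continuous.norm_le_lpNorm_top [TopologicalSpace X] [μ.IsOpenPosMeasure] {E : Type*}
    [NormedAddCommGroup E] {f : X → E} (hf : Continuous f) (h : MemLp f ∞ μ) (x : X) :
    ‖f x‖ ≤ lpNorm f ∞ μ := by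
  have hdense := (Measure.dense_of_ae (ae_le_lpNorm_exponent_top h)).closure_eq
  rw [(isClosed_le hf.norm continuous_const).closure_eq] at hdense
  exact hdense.symm.subset (mem_univ x)

lemma Continuous.integrableOn_ball [MetricSpace X] [ProperSpace X] [OpensMeasurableSpace X]
    [IsFiniteMeasureOnCompacts μ] {E : Type*} [NormedAddCommGroup E] {f : X → E}
    (hf : Continuous f) (x : X) (r : ℝ) : IntegrableOn f (ball x r) μ :=
  (hf.continuousOn.integrableOn_compact (isCompact_closedBall x r)).mono_set
    ball_subset_closedBall

lemma sq_setIntegral_sqrt_le (hS : MeasurableSet S) (hSfin : μ S ≠ ∞) {f : X → ℝ}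
    (hf0 : ∀ z ∈ S, 0 ≤ f z) (hf : IntegrableOn f S μ)
    (hsf : IntegrableOn (fun z => √(f z)) S μ) :
    (∫ z in S, √(f z) ∂μ) ^ 2 ≤ μ.real S * ∫ z in S, f z ∂μ := by
  rcases eq_or_ne (μ S) 0 with hS0 | hS0
  · simp [Measure.restrict_eq_zero.2 hS0]
  have hsq : ∀ z ∈ S, √(f z) ^ 2 = f z := fun z hz => sq_sqrt (hf0 z hz)
  have hJensen := even_two.convexOn_pow.map_set_average_le (continuous_pow 2).continuousOn
    isClosed_univ hS0 hSfin (.of_forall fun _ => mem_univ _) hsf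
    (hf.congr_fun (fun z hz => (hsq z hz).symm) hS)
  have hV : 0 < μ.real S := ENNReal.toReal_pos hS0 hSfin
  simp only [setAverage_eq, smul_eq_mul, setIntegral_congr_fun hS hsq] at hJensen
  rw [mul_pow, inv_pow, ← div_eq_inv_mul, ← div_eq_inv_mul,
    div_le_div_iff₀ (by positivity) hV] at hJensen
  nlinarith

lemma mul_setIntegral_le_setIntegral_mul (hS : MeasurableSet S) {v K : X → ℝ} {m : ℝ}
    (hv : IntegrableOn v S μ) (hvK : IntegrableOn (fun z => v z * K z) S μ)
    (hv0 : ∀ z ∈ S, 0 ≤ v z) (hK : ∀ z ∈ S, m ≤ K z) :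
    m * ∫ z in S, v z ∂μ ≤ ∫ z in S, v z * K z ∂μ := by
  rw [← integral_const_mul]
  exact setIntegral_mono_on (hv.const_mul m) hvK hS fun z hz => by
    nlinarith [hv0 z hz, hK z hz]

lemma neg_mul_setIntegral_le_setIntegral_mul (hS : MeasurableSet S) {v K k : X → ℝ} {M : ℝ}
    (hk : IntegrableOn k S μ) (hvK : IntegrableOn (fun z => v z * K z) S μ) (hM : 0 ≤ M)
    (hv : ∀ z ∈ S, -M ≤ v z) (hK0 : ∀ z ∈ S, 0 ≤ K z) (hKk : ∀ z ∈ S, K z ≤ k z) :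
    -(M * ∫ z in S, k z ∂μ) ≤ ∫ z in S, v z * K z ∂μ := by
  rw [← integral_const_mul, ← integral_neg]
  exact setIntegral_mono_on (hk.const_mul M).neg hvK hS fun z hz => by
    nlinarith [hv z hz, hK0 z hz, hKk z hz]

end Estimates

lemma neg_natCast_add_two_mul_div_two_nonpos (N : ℕ) {s : ℝ} (hs : 0 ≤ s) :
    -((N : ℝ) + 2 * s) / 2 ≤ 0 := by
  have : (0 : ℝ) ≤ N := N.cast_nonneg
  linarith

lemma Real.rpow_sub_rpow_add_le_of_le {e c t T : ℝ} (he : e ≤ 0) (hc : 0 ≤ c) (ht : 0 < t)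
    (htT : t ≤ T) : T ^ e - (T + c) ^ e ≤ t ^ e - (t + c) ^ e := by
  have hT : 0 < T := ht.trans_le htT
  have factor (u : ℝ) (hu : 0 < u) : u ^ e - (u + c) ^ e = u ^ e * (1 - (1 + c / u) ^ e) := by
    rw [mul_sub, mul_one, ← mul_rpow hu.le (by positivity), mul_add, mul_one,
      mul_div_cancel₀ _ hu.ne']
  rw [factor T hT, factor t ht]
  apply mul_le_mul (rpow_le_rpow_of_nonpos ht htT he)
  · have : c / T ≤ c / t := div_le_div_of_nonneg_left hc ht htT
    linarith [rpow_le_rpow_of_nonpos (by positivity) (by linarith : 1 + c / T ≤ 1 + c / t) he]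
  · have : 1 ≤ 1 + c / T := by linarith [div_nonneg hc hT.le]
    linarith [rpow_le_one_of_one_le_of_nonpos this he]
  · positivity

section PoissonKernel

variable {N : ℕ} {s y : ℝ}

/-- `G(w, y) / y ^ (2s)`, where `G` is the Poisson kernel of the `L_s`-harmonic extension. -/
noncomputable def csKernel (N : ℕ) (s y : ℝ) (w : Euc N) : ℝ :=
  pNs N s * (‖w‖ ^ 2 + y ^ 2) ^ (-((N : ℝ) + 2 * s) / 2)

lemma csExtension_div_rpow (hy : 0 < y) (v : Euc N → ℝ) (x : Euc N) :
    csExtension N s v x y / y ^ (2 * s) = ∫ z, v z * csKernel N s y (x - z) := by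
  have : y ^ (2 * s) ≠ 0 := (rpow_pos_of_pos hy _).ne'
  rw [csExtension, ← integral_div]
  congr with z
  rw [csKernel]
  field_simp

lemma integrable_rpow_norm_sq_add_sq (hs : 0 < s) (hy : y ≠ 0) :
    Integrable fun w : Euc N => (‖w‖ ^ 2 + y ^ 2) ^ (-((N : ℝ) + 2 * s) / 2) := by
  set e := -((N : ℝ) + 2 * s) / 2
  set m := min (y ^ 2) 1
  have hm : 0 < m := lt_min (by positivity) one_pos
  have he : e ≤ 0 := neg_natCast_add_two_mul_div_two_nonpos N hs.le
  have hint : Integrable fun w : Euc N => (1 + ‖w‖ ^ 2) ^ e :=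
    integrable_rpow_neg_one_add_norm_sq (by simp; linarith)
  refine (hint.const_mul (m ^ e)).mono'
    (Continuous.rpow_const (by fun_prop) fun w => Or.inl (by positivity)).aestronglyMeasurable
    (.of_forall fun w => ?_)
  have hle : m * (1 + ‖w‖ ^ 2) ≤ ‖w‖ ^ 2 + y ^ 2 := by
    nlinarith [min_le_left (y ^ 2) 1, min_le_right (y ^ 2) 1, sq_nonneg ‖w‖]
  rw [Real.norm_eq_abs, abs_of_nonneg (by positivity), ← mul_rpow hm.le (by positivity)]
  exact rpow_le_rpow_of_nonpos (by positivity) hle he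

lemma pNs_nonneg (N : ℕ) (s : ℝ) : 0 ≤ pNs N s :=
  inv_nonneg.2 (integral_nonneg fun _ => by positivity)

lemma pNs_pos (hs : 0 < s) : 0 < pNs N s := by
  refine inv_pos.2 (integral_pos_of_integrable_nonneg_nonzero (x := 0)
    (Continuous.rpow_const (by fun_prop) fun w => Or.inl (by positivity)) ?_
    (fun _ => by positivity) (by positivity))
  simpa [add_comm] using integrable_rpow_norm_sq_add_sq (N := N) hs one_ne_zero

lemma csKernel_nonneg (N : ℕ) (s y : ℝ) (w : Euc N) : 0 ≤ csKernel N s y w :=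
  mul_nonneg (pNs_nonneg N s) (by positivity)

lemma csKernel_pos (hs : 0 < s) (hy : y ≠ 0) (w : Euc N) : 0 < csKernel N s y w :=
  mul_pos (pNs_pos hs) (by positivity)

lemma continuous_csKernel (hy : y ≠ 0) : Continuous (csKernel N s y) :=
  continuous_const.mul (Continuous.rpow_const (by fun_prop) fun w => Or.inl (by positivity))

lemma integrable_csKernel (hs : 0 < s) (hy : y ≠ 0) : Integrable (csKernel N s y) :=
  (integrable_rpow_norm_sq_add_sq hs hy).const_mul _

lemma csKernel_le_csKernel (hs : 0 ≤ s) (hy : y ≠ 0) {w w' : Euc N} (h : ‖w‖ ≤ ‖w'‖) :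
    csKernel N s y w' ≤ csKernel N s y w := by
  refine mul_le_mul_of_nonneg_left (rpow_le_rpow_of_nonpos (by positivity) ?_ ?_)
    (pNs_nonneg N s)
  · gcongr
  · exact neg_natCast_add_two_mul_div_two_nonpos N hs

lemma mul_rpow_sub_rpow_le_csKernel_sub (hs : 0 ≤ s) (hy : y ≠ 0) {w w' : Euc N} {c T : ℝ}
    (hc : 0 ≤ c) (hT : ‖w‖ ^ 2 + y ^ 2 ≤ T) (hw' : ‖w‖ ^ 2 + c ≤ ‖w'‖ ^ 2) :
    pNs N s * (T ^ (-((N : ℝ) + 2 * s) / 2) - (T + c) ^ (-((N : ℝ) + 2 * s) / 2))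
      ≤ csKernel N s y w - csKernel N s y w' := by
  have he := neg_natCast_add_two_mul_div_two_nonpos N hs
  have hmono := rpow_le_rpow_of_nonpos (by positivity)
    (by linarith : ‖w‖ ^ 2 + y ^ 2 + c ≤ ‖w'‖ ^ 2 + y ^ 2) he
  rw [csKernel, csKernel, ← mul_sub]
  refine mul_le_mul_of_nonneg_left ?_ (pNs_nonneg N s)
  linarith [Real.rpow_sub_rpow_add_le_of_le he hc (by positivity) hT]

lemma csKernel_le_of_le_norm (hs : 0 ≤ s) {ρ : ℝ} (hρ : 0 < ρ) {w : Euc N} (hw : ρ ≤ ‖w‖) :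
    csKernel N s y w ≤ 2 ^ (((N : ℝ) + 2 * s) / 2) * csKernel N s ρ w := by
  have he := neg_natCast_add_two_mul_div_two_nonpos N hs
  have hle : (‖w‖ ^ 2 + ρ ^ 2) / 2 ≤ ‖w‖ ^ 2 + y ^ 2 := by nlinarith [sq_nonneg y]
  have h := rpow_le_rpow_of_nonpos (by positivity) hle he
  rw [div_rpow (by positivity) zero_le_two] at h
  calc csKernel N s y w
      ≤ pNs N s * ((‖w‖ ^ 2 + ρ ^ 2) ^ (-((N : ℝ) + 2 * s) / 2)
          / 2 ^ (-((N : ℝ) + 2 * s) / 2)) := mul_le_mul_of_nonneg_left h (pNs_nonneg N s)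
    _ = 2 ^ (((N : ℝ) + 2 * s) / 2) * csKernel N s ρ w := by
      rw [csKernel, show ((N : ℝ) + 2 * s) / 2 = -(-((N : ℝ) + 2 * s) / 2) by ring,
        rpow_neg zero_le_two]
      ring

end PoissonKernel

section AntisymmetricExtension

open HalfSpace

variable {N : ℕ} {s y ρ : ℝ} {a x₀ x : Euc N} {b : ℝ} {v : Euc N → ℝ}

noncomputable def antisymCsKernel (N : ℕ) (s : ℝ) (a : Euc N) (b y : ℝ) (x z : Euc N) : ℝ :=
  csKernel N s y (x - z) - csKernel N s y (x - reflAt a b z)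

/-- `p_{N,s} (T^e - (T + c)^e)` with `e = -(N+2s)/2`, `T = 4ρ² + 1 ≥ |x - z|² + y²` and
`c = 4ρ² ≤ |x - Qz|² - |x - z|²` for `x, z ∈ B_ρ(x₀)` and `y ≤ 1`. -/
noncomputable def csKernelGap (N : ℕ) (s ρ : ℝ) : ℝ :=
  pNs N s * ((4 * ρ ^ 2 + 1) ^ (-((N : ℝ) + 2 * s) / 2)
    - (4 * ρ ^ 2 + 1 + 4 * ρ ^ 2) ^ (-((N : ℝ) + 2 * s) / 2))

noncomputable def csTailConst (N : ℕ) (s ρ : ℝ) : ℝ :=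
  2 ^ (((N : ℝ) + 2 * s) / 2) * ∫ w, csKernel N s ρ w

lemma csKernelGap_pos (hs : 0 < s) (hρ : 0 < ρ) : 0 < csKernelGap N s ρ := by
  have hN : (0 : ℝ) ≤ N := N.cast_nonneg
  exact mul_pos (pNs_pos hs) (sub_pos.2 (rpow_lt_rpow_of_neg (by positivity) (by nlinarith)
    (by linarith)))

lemma csTailConst_pos (hs : 0 < s) (hρ : 0 < ρ) : 0 < csTailConst N s ρ :=
  mul_pos (by positivity) (integral_pos_of_integrable_nonneg_nonzero (x := 0)
    (continuous_csKernel hρ.ne') (integrable_csKernel hs hρ.ne') (csKernel_nonneg N s ρ)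
    (csKernel_pos hs hρ.ne' 0).ne')

lemma setIntegral_csKernel_le_csTailConst (hs : 0 < s) (hy : y ≠ 0) (hρ : 0 < ρ)
    {S : Set (Euc N)} (hS : MeasurableSet S) (hfar : ∀ z ∈ S, ρ ≤ ‖x - z‖) :
    ∫ z in S, csKernel N s y (x - z) ≤ csTailConst N s ρ := by
  have hkρ := ((integrable_csKernel (N := N) hs hρ.ne').comp_sub_left x).const_mul
    (2 ^ (((N : ℝ) + 2 * s) / 2))
  calc ∫ z in S, csKernel N s y (x - z)
      ≤ ∫ z in S, 2 ^ (((N : ℝ) + 2 * s) / 2) * csKernel N s ρ (x - z) :=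
        setIntegral_mono_on ((integrable_csKernel hs hy).comp_sub_left x).integrableOn
          hkρ.integrableOn hS fun z hz => csKernel_le_of_le_norm hs.le hρ (hfar z hz)
    _ ≤ ∫ z, 2 ^ (((N : ℝ) + 2 * s) / 2) * csKernel N s ρ (x - z) :=
        setIntegral_le_integral hkρ (.of_forall fun z => by
          have := csKernel_nonneg N s ρ (x - z)
          positivity)
    _ = csTailConst N s ρ := by
        rw [integral_const_mul, integral_sub_left_eq_self (csKernel N s ρ), csTailConst]

lemma antisymCsKernel_nonneg (hs : 0 ≤ s) (ha : a ≠ 0) (hy : y ≠ 0) {z : Euc N}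
    (hx : x ∈ halfSpace a b) (hz : z ∈ halfSpace a b) : 0 ≤ antisymCsKernel N s a b y x z := by
  have hprod : 0 ≤ 4 * ((inner ℝ a x - b) * (inner ℝ a z - b)) / ‖a‖ ^ 2 := by
    have : 0 < inner ℝ a x - b := sub_pos.2 hx
    have : 0 < inner ℝ a z - b := sub_pos.2 hz
    positivity
  have hnorm : ‖x - z‖ ^ 2 ≤ ‖x - reflAt a b z‖ ^ 2 := by
    rw [norm_sub_reflAt_sq ha]
    linarith
  exact sub_nonneg.2 (csKernel_le_csKernel hs hy
    ((pow_le_pow_iff_left₀ (norm_nonneg _) (norm_nonneg _) two_ne_zero).1 hnorm))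

lemma antisymCsKernel_le (z : Euc N) : antisymCsKernel N s a b y x z ≤ csKernel N s y (x - z) :=
  sub_le_self _ (csKernel_nonneg N s y _)

lemma integrable_antisymCsKernel (hs : 0 < s) (ha : a ≠ 0) (hy : y ≠ 0) :
    Integrable (antisymCsKernel N s a b y x) := by
  have hk := (integrable_csKernel (N := N) hs hy).comp_sub_left x
  exact hk.sub (((measurePreserving_reflAt a b).integrable_comp_emb
    (measurableEmbedding_reflAt ha)).2 hk)

lemma csKernelGap_le_antisymCsKernel (hs : 0 ≤ s) (ha : a ≠ 0) (hy : y ∈ Ioc 0 1) {z : Euc N}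
    (hx : x ∈ ball x₀ ρ) (hz : z ∈ ball x₀ ρ) (hxH : ρ * ‖a‖ ≤ inner ℝ a x - b)
    (hzH : ρ * ‖a‖ ≤ inner ℝ a z - b) :
    csKernelGap N s ρ ≤ antisymCsKernel N s a b y x z := by
  have hρ : 0 < ρ := pos_of_mem_ball hx
  have hxz : ‖x - z‖ < 2 * ρ := by
    rw [← dist_eq_norm]
    linarith [dist_triangle_right x z x₀, mem_ball.1 hx, mem_ball.1 hz]
  have hprod : 4 * ρ ^ 2 ≤ 4 * ((inner ℝ a x - b) * (inner ℝ a z - b)) / ‖a‖ ^ 2 := by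
    rw [le_div_iff₀ (by positivity)]
    nlinarith [mul_le_mul hxH hzH (by positivity) (hxH.trans' (by positivity))]
  refine mul_rpow_sub_rpow_le_csKernel_sub hs hy.1.ne' (by positivity) ?_ ?_
  · nlinarith [norm_nonneg (x - z), hy.1, hy.2]
  · rw [norm_sub_reflAt_sq ha]
    linarith

lemma csExtension_div_rpow_eq_setIntegral_halfSpace (hs : 0 < s) (ha : a ≠ 0) (hy : 0 < y)
    (hv : Antisym a b v) (hvL : MemLp v ⊤ volume) :
    csExtension N s v x y / y ^ (2 * s)
      = ∫ z in halfSpace a b, v z * antisymCsKernel N s a b y x z := by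
  rw [csExtension_div_rpow hy, hv.integral_mul_eq_setIntegral_halfSpace ha
    (((integrable_csKernel hs hy.ne').comp_sub_left x).mul_of_top_right hvL)]
  rfl

lemma csKernelGap_mul_le_setIntegral_ball (hs : 0 < s) (ha : a ≠ 0) (hx₀ : x₀ ∈ halfSpace a b)
    (hdist : 2 * ρ ≤ infDist x₀ (frontier (halfSpace a b))) (hvc : Continuous v)
    (hvL : MemLp v ⊤ volume) (hv0 : ∀ z ∈ ball x₀ (2 * ρ), 0 ≤ v z) (hx : x ∈ ball x₀ ρ)
    (hy : y ∈ Ioc 0 1) :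
    csKernelGap N s ρ * ∫ z in ball x₀ ρ, v z
      ≤ ∫ z in ball x₀ (2 * ρ), v z * antisymCsKernel N s a b y x z := by
  have hBB : ball x₀ ρ ⊆ ball x₀ (2 * ρ) := ball_subset_ball (by linarith [pos_of_mem_ball hx])
  have hB₂H := ball_subset_halfSpace ha hx₀ hdist
  have hvK : Integrable fun z => v z * antisymCsKernel N s a b y x z :=
    (integrable_antisymCsKernel hs ha hy.1.ne').mul_of_top_right hvL
  have hball := mul_setIntegral_le_setIntegral_mul measurableSet_ball
    (hvc.integrableOn_ball x₀ ρ) hvK.integrableOn (fun z hz => hv0 z (hBB hz))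
    fun z hz => csKernelGap_le_antisymCsKernel hs.le ha hy hx hz
      (mul_norm_le_inner_sub_of_mem_ball ha hx₀ hdist hx)
      (mul_norm_le_inner_sub_of_mem_ball ha hx₀ hdist hz)
  have hannulus : 0 ≤ ∫ z in ball x₀ (2 * ρ) \ ball x₀ ρ, v z * antisymCsKernel N s a b y x z :=
    setIntegral_nonneg (measurableSet_ball.diff measurableSet_ball) fun z hz =>
      mul_nonneg (hv0 z hz.1)
        (antisymCsKernel_nonneg hs.le ha hy.1.ne' (hB₂H (hBB hx)) (hB₂H hz.1))
  rw [← integral_inter_add_sdiff measurableSet_ball hvK.integrableOn, inter_eq_right.2 hBB]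
  linarith

lemma neg_mul_csTailConst_le_setIntegral (hs : 0 < s) (ha : a ≠ 0) (hx₀ : x₀ ∈ halfSpace a b)
    (hdist : 2 * ρ ≤ infDist x₀ (frontier (halfSpace a b))) (hvc : Continuous v)
    (hvL : MemLp v ⊤ volume) (hx : x ∈ ball x₀ ρ) (hy : 0 < y) :
    -(supOn (halfSpace a b \ ball x₀ (2 * ρ)) (negp v) * csTailConst N s ρ)
      ≤ ∫ z in halfSpace a b \ ball x₀ (2 * ρ), v z * antisymCsKernel N s a b y x z := by
  have hρ : 0 < ρ := pos_of_mem_ball hx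
  have hS : MeasurableSet (halfSpace a b \ ball x₀ (2 * ρ)) :=
    (isOpen_halfSpace a b).measurableSet.diff measurableSet_ball
  have hfar : ∀ z ∈ halfSpace a b \ ball x₀ (2 * ρ), ρ ≤ ‖x - z‖ := fun z hz => by
    rw [← dist_eq_norm]
    linarith [dist_triangle_left z x₀ x, not_lt.1 (mem_ball.not.1 hz.2), mem_ball.1 hx]
  have hvbdd : BddBelow (v '' (halfSpace a b \ ball x₀ (2 * ρ))) :=
    ⟨-lpNorm v ⊤ volume, by
      rintro _ ⟨z, -, rfl⟩
      exact neg_le_of_abs_le (hvc.norm_le_lpNorm_top hvL z)⟩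
  have hxH : x ∈ halfSpace a b :=
    ball_subset_halfSpace ha hx₀ hdist (ball_subset_ball (by linarith) hx)
  refine le_trans (neg_le_neg (mul_le_mul_of_nonneg_left
      (setIntegral_csKernel_le_csTailConst hs hy.ne' hρ hS hfar) (supOn_negp_nonneg _ _)))
    (neg_mul_setIntegral_le_setIntegral_mul hS
      ((integrable_csKernel hs hy.ne').comp_sub_left x).integrableOn
      ((integrable_antisymCsKernel hs ha hy.ne').mul_of_top_right hvL).integrableOn
      (supOn_negp_nonneg _ _) (fun z hz => neg_supOn_negp_le hvbdd hz)
      (fun z hz => antisymCsKernel_nonneg hs.le ha hy.ne' hxH hz.1)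
      fun z _ => antisymCsKernel_le z)

end AntisymmetricExtension

theorem cs_extension_lower_bound_general
    (N : ℕ) (s : ℝ) (hs : s ∈ Set.Ioo (0 : ℝ) 1)
    (ρ : ℝ) (hρ : 0 < ρ) :
    ∃ c₁ : ℝ, 0 < c₁ ∧ ∃ c₂ : ℝ, 0 < c₂ ∧
      ∀ (a : Euc N), a ≠ 0 → ∀ b : ℝ,
      ∀ x₀ : Euc N, x₀ ∈ halfSpace a b →
        2 * ρ ≤ Metric.infDist x₀ (frontier (halfSpace a b)) →
      ∀ v : Euc N → ℝ, Continuous v → MemHs N s v →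
        MemLp v ⊤ (volume : Measure (Euc N)) → Antisym a b v →
        (∀ x ∈ Metric.ball x₀ (2 * ρ), 0 ≤ v x) →
        ∀ x ∈ Metric.ball x₀ ρ, ∀ y ∈ Set.Ioc (0 : ℝ) 1,
          c₁ * (∫ z in Metric.ball x₀ ρ, Real.sqrt (v z)) ^ 2 -
              c₂ * supOn (halfSpace a b \ Metric.ball x₀ (2 * ρ)) (negp v) ≤
            csExtension N s v x y / y ^ (2 * s) := by
  have hV : 0 < volume.real (ball (0 : Euc N) ρ) :=
    ENNReal.toReal_pos (measure_ball_pos volume 0 hρ).ne' measure_ball_lt_top.ne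
  refine ⟨csKernelGap N s ρ / volume.real (ball (0 : Euc N) ρ),
    div_pos (csKernelGap_pos hs.1 hρ) hV, csTailConst N s ρ, csTailConst_pos hs.1 hρ, ?_⟩
  intro a ha b x₀ hx₀ hdist v hvc _ hvL hvA hv0 x hx y hy
  have hvK : Integrable fun z => v z * antisymCsKernel N s a b y x z :=
    (integrable_antisymCsKernel hs.1 ha hy.1.ne').mul_of_top_right hvL
  rw [csExtension_div_rpow_eq_setIntegral_halfSpace hs.1 ha hy.1 hvA hvL,
    ← integral_inter_add_sdiff measurableSet_ball hvK.integrableOn,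
    inter_eq_right.2 (HalfSpace.ball_subset_halfSpace ha hx₀ hdist)]
  have hinner := csKernelGap_mul_le_setIntegral_ball hs.1 ha hx₀ hdist hvc hvL hv0 hx hy
  have houter := neg_mul_csTailConst_le_setIntegral hs.1 ha hx₀ hdist hvc hvL hx hy.1
  have hJensen := sq_setIntegral_sqrt_le (μ := volume) measurableSet_ball measure_ball_lt_top.ne
    (fun z hz => hv0 z (ball_subset_ball (by linarith) hz))
    (hvc.integrableOn_ball x₀ ρ) ((continuous_sqrt.comp hvc).integrableOn_ball x₀ ρ)
  rw [measureReal_def, Measure.addHaar_ball_center, ← measureReal_def] at hJensen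
  have hgap : csKernelGap N s ρ / volume.real (ball (0 : Euc N) ρ)
      * (∫ z in ball x₀ ρ, √(v z)) ^ 2 ≤ csKernelGap N s ρ * ∫ z in ball x₀ ρ, v z := by
    rw [div_mul_eq_mul_div, div_le_iff₀ hV]
    nlinarith [csKernelGap_pos (N := N) hs.1 hρ]
  linarith

/-- **Lemma 2.11: lower bound for the Caffarelli–Silvestre extension of a
continuous antisymmetric function which is nonnegative on `B_{2ρ}(x₀)`.** -/
theorem cs_extension_lower_bound
    (N : ℕ) [NeZero N] (s : ℝ) (hs : s ∈ Set.Ioo (0 : ℝ) 1)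
    (ρ : ℝ) (hρ : 0 < ρ) :
    ∃ c₁ : ℝ, 0 < c₁ ∧ ∃ c₂ : ℝ, 0 < c₂ ∧
      ∀ (a : Euc N), a ≠ 0 → ∀ b : ℝ,
      ∀ x₀ : Euc N, x₀ ∈ halfSpace a b →
        2 * ρ ≤ Metric.infDist x₀ (frontier (halfSpace a b)) →
      ∀ v : Euc N → ℝ, Continuous v → MemHs N s v →
        MemLp v ⊤ (volume : Measure (Euc N)) → Antisym a b v →
        (∀ x ∈ Metric.ball x₀ (2 * ρ), 0 ≤ v x) →
        ∀ x ∈ Metric.ball x₀ ρ, ∀ y ∈ Set.Ioc (0 : ℝ) 1,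
          c₁ * (∫ z in Metric.ball x₀ ρ, Real.sqrt (v z)) ^ 2 -
              c₂ * supOn (halfSpace a b \ Metric.ball x₀ (2 * ρ)) (negp v) ≤
            csExtension N s v x y / y ^ (2 * s) :=
  cs_extension_lower_bound_general N s hs ρ hρ
end

section
/- Let Ω ⊂ ℝ^N satisfy (D1) and let M ⊂ C_0(Ω) be a bounded and equicontinuous subset. For λ ∈ [0,l) define I_λ(M) := inf{V_λ u(x) : u ∈ M, x ∈ Ω_λ}. Then the map λ ↦ I_λ(M) is left continuous on (0,l): for every λ₀ ∈ (0,l), I_λ(M) → I_{λ₀}(M) as λ → λ₀ with λ < λ₀. -/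
open MeasureTheory Real Set Filter Topology Metric
open scoped NNReal ENNReal

/-! Moving `λ` by `h` moves `Q_λ x` by `2h`, so by equicontinuity `V_λ w` changes by little,
uniformly in `w ∈ M`, on `Ω_{λ₀} ⊆ Ω_λ`. The only other points of `Ω_λ` lie in the thin strip
`λ < x₁ ≤ λ₀`, where `x` is close to `Q_λ x` and hence `V_λ w (x) ≈ 0`; these cannot push
`I_λ` far below `I_{λ₀}` because `I_{λ₀} ≤ 0`: by the symmetry of `Ω` in `x₁`, `Ω_{λ₀}` has points
arbitrarily close to the hyperplane `{x₁ = λ₀}`. -/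

section Reflection

variable {N : ℕ} [NeZero N]

lemma dist_ofFun_update_zero (g : Fin N → ℝ) (a b : ℝ) :
    dist (ofFun (Function.update g 0 a) : Euc N) (ofFun (Function.update g 0 b)) = |a - b| := by
  rw [EuclideanSpace.dist_eq]
  have hcoord : ∀ i : Fin N, dist ((ofFun (Function.update g 0 a) : Euc N) i)
      ((ofFun (Function.update g 0 b) : Euc N) i) ^ 2 = if i = 0 then dist a b ^ 2 else 0 := by
    intro i
    by_cases hi : i = 0
    · subst hi; simp [ofFun]
    · simp [ofFun, hi]
  rw [Finset.sum_congr rfl fun i _ => hcoord i]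
  simp [Real.dist_eq, Real.sqrt_sq_eq_abs]

lemma dist_Qlam_Qlam (lam lam' : ℝ) (x : Euc N) :
    dist (Qlam N lam x) (Qlam N lam' x) = 2 * |lam - lam'| := by
  rw [Qlam, Qlam, dist_ofFun_update_zero, ← abs_two, ← abs_mul]
  ring_nf

lemma dist_Qlam_self (lam : ℝ) (x : Euc N) :
    dist (Qlam N lam x) x = 2 * |lam - toFun x 0| := by
  have hx : (ofFun (Function.update (toFun x) 0 (toFun x 0)) : Euc N) = x := by
    simp [ofFun, toFun]
  conv_lhs => arg 2; rw [← hx]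
  rw [Qlam, dist_ofFun_update_zero, ← abs_two, ← abs_mul]
  ring_nf

lemma toFun_flipFirst_zero (σ : ℝ) (x : Euc N) :
    toFun (flipFirst σ x) 0 = σ * toFun x 0 := by
  simp [flipFirst, toFun, ofFun]

lemma exists_mem_toFun_zero_eq {Ω : Set (Euc N)}
    (hsym : ∀ x ∈ Ω, ∀ σ ∈ Icc (-1 : ℝ) 1, flipFirst σ x ∈ Ω)
    {x : Euc N} (hx : x ∈ Ω) {t : ℝ} (ht : |t| ≤ toFun x 0) :
    ∃ y ∈ Ω, toFun y 0 = t := by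
  have hσ : |t / toFun x 0| ≤ 1 := by
    rw [abs_div]
    exact div_le_one_of_le₀ (ht.trans (le_abs_self _)) (abs_nonneg _)
  refine ⟨flipFirst (t / toFun x 0) x, hsym x hx _ (abs_le.1 hσ), ?_⟩
  rw [toFun_flipFirst_zero, div_mul_cancel_of_imp]
  intro h0
  exact abs_nonpos_iff.1 (h0 ▸ ht)

lemma exists_mem_lt_toFun_zero {Ω : Set (Euc N)} (hΩ : Ω.Nonempty) {lam : ℝ}
    (hlam : lam < lmax N Ω) : ∃ x ∈ Ω, lam < toFun x 0 := by
  obtain ⟨_, ⟨x, hx, rfl⟩, hlt⟩ := exists_lt_of_lt_csSup (hΩ.image _) hlam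
  exact ⟨x, hx, hlt⟩

variable {w : Euc N → ℝ} {ε δ : ℝ}

lemma abs_Vlam_sub_Vlam_lt (hw : ∀ p q, dist p q < δ → |w p - w q| < ε)
    {lam lam' : ℝ} (h : 2 * |lam - lam'| < δ) (x : Euc N) :
    |Vlam N lam w x - Vlam N lam' w x| < ε := by
  calc |Vlam N lam w x - Vlam N lam' w x| = |w (Qlam N lam x) - w (Qlam N lam' x)| := by
        simp only [Vlam]; ring_nf
    _ < ε := hw _ _ (by rwa [dist_Qlam_Qlam])

lemma abs_Vlam_lt (hw : ∀ p q, dist p q < δ → |w p - w q| < ε)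
    {lam : ℝ} {x : Euc N} (h : 2 * |lam - toFun x 0| < δ) :
    |Vlam N lam w x| < ε :=
  hw _ _ (by rwa [dist_Qlam_self])

end Reflection

lemma csInf_le_csInf_add {A B : Set ℝ} (hA : BddBelow A) (hB : B.Nonempty) {ε : ℝ}
    (h : ∀ b ∈ B, ∃ a ∈ A, a ≤ b + ε) : sInf A ≤ sInf B + ε := by
  suffices sInf A - ε ≤ sInf B by linarith
  refine le_csInf hB fun b hb => ?_
  obtain ⟨a, ha, hab⟩ := h b hb
  linarith [csInf_le hA ha]

section Infimum

variable {N : ℕ} [NeZero N] {Ω : Set (Euc N)} {M : Set (Euc N → ℝ)}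

/-- `I_λ(M) = sInf (VlamRange N Ω M λ)`. -/
def VlamRange (N : ℕ) [NeZero N] (Ω : Set (Euc N)) (M : Set (Euc N → ℝ)) (lam : ℝ) : Set ℝ :=
  {y : ℝ | ∃ w ∈ M, ∃ x ∈ Ω ∩ Hlam N lam, y = Vlam N lam w x}

lemma Vlam_mem_VlamRange {w : Euc N → ℝ} (hw : w ∈ M) {x : Euc N} (hx : x ∈ Ω) {lam : ℝ}
    (hlam : lam < toFun x 0) : Vlam N lam w x ∈ VlamRange N Ω M lam :=
  ⟨w, hw, x, ⟨hx, hlam⟩, rfl⟩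

lemma bddBelow_VlamRange {C : ℝ} (hC : ∀ w ∈ M, ∀ x, |w x| ≤ C) (lam : ℝ) :
    BddBelow (VlamRange N Ω M lam) := by
  refine ⟨-(2 * C), ?_⟩
  rintro _ ⟨w, hw, x, -, rfl⟩
  have h₁ := abs_le.1 (hC w hw (Qlam N lam x))
  have h₂ := abs_le.1 (hC w hw x)
  simp only [Vlam]
  linarith

lemma sInf_VlamRange_nonpos (hsym : ∀ x ∈ Ω, ∀ σ ∈ Icc (-1 : ℝ) 1, flipFirst σ x ∈ Ω)
    (hM : M.Nonempty)
    (hMeq : ∀ ε : ℝ, 0 < ε → ∃ δ : ℝ, 0 < δ ∧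
      ∀ w ∈ M, ∀ x x' : Euc N, dist x x' < δ → |w x - w x'| < ε)
    {lam : ℝ} (hlam : 0 ≤ lam) (hbdd : BddBelow (VlamRange N Ω M lam))
    {x₁ : Euc N} (hx₁ : x₁ ∈ Ω) (hlt : lam < toFun x₁ 0) :
    sInf (VlamRange N Ω M lam) ≤ 0 := by
  obtain ⟨w, hw⟩ := hM
  refine le_of_forall_pos_le_add fun η hη => ?_
  obtain ⟨δ, hδ, hmod⟩ := hMeq η hη
  set t := min (lam + δ / 4) (toFun x₁ 0)
  have hlam_t : lam < t := lt_min (by linarith) hlt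
  have ht_near : 2 * |lam - t| < δ := by
    rw [abs_of_neg (by linarith)]
    linarith [min_le_left (lam + δ / 4) (toFun x₁ 0)]
  obtain ⟨y, hy, hyt⟩ :=
    exists_mem_toFun_zero_eq hsym hx₁ (t := t) (by rw [abs_of_pos (by linarith)]; exact min_le_right _ _)
  have hsmall := abs_Vlam_lt (hmod w hw) (x := y) (hyt ▸ ht_near)
  calc sInf (VlamRange N Ω M lam) ≤ Vlam N lam w y :=
        csInf_le hbdd (Vlam_mem_VlamRange hw hy (hyt ▸ hlam_t))
    _ ≤ 0 + η := by linarith [(abs_lt.1 hsmall).2]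

variable {ε δ lam lam₀ : ℝ}
    (hmod : ∀ w ∈ M, ∀ x x' : Euc N, dist x x' < δ → |w x - w x'| < ε)
    (hle : lam ≤ lam₀) (hgap : 2 * (lam₀ - lam) < δ)
include hmod hle hgap

lemma sInf_VlamRange_le_add (hbdd : BddBelow (VlamRange N Ω M lam))
    (hne : (VlamRange N Ω M lam₀).Nonempty) :
    sInf (VlamRange N Ω M lam) ≤ sInf (VlamRange N Ω M lam₀) + ε := by
  refine csInf_le_csInf_add hbdd hne ?_
  rintro _ ⟨w, hw, x, ⟨hx, hx₀⟩, rfl⟩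
  refine ⟨Vlam N lam w x, Vlam_mem_VlamRange hw hx (hle.trans_lt hx₀), ?_⟩
  have h := abs_Vlam_sub_Vlam_lt (hmod w hw) (lam := lam) (lam' := lam₀)
    (by rwa [abs_sub_comm, abs_of_nonneg (by linarith)]) x
  linarith [(abs_lt.1 h).2]

lemma sInf_VlamRange_sub_le (hbdd₀ : BddBelow (VlamRange N Ω M lam₀))
    (hne : (VlamRange N Ω M lam).Nonempty) (hnonpos : sInf (VlamRange N Ω M lam₀) ≤ 0) :
    sInf (VlamRange N Ω M lam₀) - ε ≤ sInf (VlamRange N Ω M lam) := by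
  refine le_csInf hne ?_
  rintro _ ⟨w, hw, x, ⟨hx, hxlam⟩, rfl⟩
  have hxlam : lam < toFun x 0 := hxlam
  rcases lt_or_ge lam₀ (toFun x 0) with hx₀ | hx₀
  · have h := abs_Vlam_sub_Vlam_lt (hmod w hw) (lam := lam) (lam' := lam₀)
      (by rwa [abs_sub_comm, abs_of_nonneg (by linarith)]) x
    linarith [(abs_lt.1 h).1, csInf_le hbdd₀ (Vlam_mem_VlamRange hw hx hx₀)]
  · have h := abs_Vlam_lt (hmod w hw) (lam := lam) (x := x)
      (by rw [abs_of_neg (by linarith)]; linarith)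
    linarith [(abs_lt.1 h).1]

end Infimum

theorem left_continuity_of_inf_general
    (N : ℕ) [NeZero N]
    (Ω : Set (Euc N)) (hD1 : CondD1 N Ω)
    (M : Set (Euc N → ℝ))
    (hMb : ∃ C : ℝ, ∀ w ∈ M, ∀ x, |w x| ≤ C)
    (hMeq : ∀ ε : ℝ, 0 < ε → ∃ δ : ℝ, 0 < δ ∧
      ∀ w ∈ M, ∀ x x' : Euc N, dist x x' < δ → |w x - w x'| < ε)
    (lam₀ : ℝ) (h0 : 0 < lam₀) (hl : lam₀ < lmax N Ω) :
    Tendsto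
      (fun lam : ℝ =>
        sInf {y : ℝ | ∃ w ∈ M, ∃ x ∈ Ω ∩ Hlam N lam, y = Vlam N lam w x})
      (nhdsWithin lam₀ (Set.Iio lam₀))
      (nhds (sInf {y : ℝ | ∃ w ∈ M, ∃ x ∈ Ω ∩ Hlam N lam₀, y = Vlam N lam₀ w x})) := by
  change Tendsto (fun lam => sInf (VlamRange N Ω M lam)) _ (𝓝 (sInf (VlamRange N Ω M lam₀)))
  rcases M.eq_empty_or_nonempty with rfl | hM
  · simp [VlamRange]
  obtain ⟨C, hC⟩ := hMb
  obtain ⟨-, hconn, -, -, hsym⟩ := hD1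
  obtain ⟨x₁, hx₁, hlt⟩ := exists_mem_lt_toFun_zero hconn.nonempty hl
  have hnonpos := sInf_VlamRange_nonpos hsym hM hMeq h0.le (bddBelow_VlamRange hC _) hx₁ hlt
  rw [Metric.tendsto_nhdsWithin_nhds]
  intro ε hε
  obtain ⟨δ, hδ, hmod⟩ := hMeq (ε / 2) (half_pos hε)
  obtain ⟨w, hw⟩ := hM
  refine ⟨δ / 2, half_pos hδ, fun lam (hlam : lam < lam₀) hdist => ?_⟩
  have hgap : 2 * (lam₀ - lam) < δ := by
    rw [Real.dist_eq, abs_of_neg (by linarith)] at hdist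
    linarith
  have hupper := sInf_VlamRange_le_add hmod hlam.le hgap (bddBelow_VlamRange hC _)
    ⟨_, Vlam_mem_VlamRange hw hx₁ hlt⟩
  have hlower := sInf_VlamRange_sub_le hmod hlam.le hgap (bddBelow_VlamRange hC _)
    ⟨_, Vlam_mem_VlamRange hw hx₁ (hlam.trans hlt)⟩ hnonpos
  rw [Real.dist_eq, abs_sub_lt_iff]
  constructor <;> linarith

/-- **Lemma 3.4: left continuity of `λ ↦ I_λ(M)` for a bounded equicontinuous
family `M ⊂ C_0(Ω)`.** -/
theorem left_continuity_of_inf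
    (N : ℕ) [NeZero N]
    (Ω : Set (Euc N)) (hD1 : CondD1 N Ω)
    (M : Set (Euc N → ℝ))
    (hM0 : ∀ w ∈ M, MemC0 N Ω w)
    (hMb : ∃ C : ℝ, ∀ w ∈ M, ∀ x, |w x| ≤ C)
    (hMeq : ∀ ε : ℝ, 0 < ε → ∃ δ : ℝ, 0 < δ ∧
      ∀ w ∈ M, ∀ x x' : Euc N, dist x x' < δ → |w x - w x'| < ε)
    (lam₀ : ℝ) (h0 : 0 < lam₀) (hl : lam₀ < lmax N Ω) :
    Tendsto
      (fun lam : ℝ =>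
        sInf {y : ℝ | ∃ w ∈ M, ∃ x ∈ Ω ∩ Hlam N lam, y = Vlam N lam w x})
      (nhdsWithin lam₀ (Set.Iio lam₀))
      (nhds (sInf {y : ℝ | ∃ w ∈ M, ∃ x ∈ Ω ∩ Hlam N lam₀, y = Vlam N lam₀ w x})) :=
  left_continuity_of_inf_general N Ω hD1 M hMb hMeq lam₀ h0 hl
end
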